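/- arXiv:2507.07091 — 7 statements merged into one kernel-verified Lean document; each statement's English description precedes it below -/
import Mathlib

section
/- Let X be a commutative monoid and (X₀, ϖ) a weak pair of definition of X. Then the generalized gauge p of (X₀, ϖ) is power-multiplicative: p(f^m) = p(f)^m for all f ∈ X and all integers m > 0. -/
open scoped ENNReal

/-- The generalized gauge of a weak pair of definition `(X₀, ϖ)` (with `ϖ` given as the
unit `u` of `X`): `p(f) = inf { 2^(-n/m) : n ∈ ℤ, m ∈ ℤ_{>0}, f^m ∈ ϖ^n X₀ }`. -/
noncomputable def genGauge {X : Type*} [CommMonoid X] (X₀ : Set X) (u : Xˣ) (f : X) : ℝ≥0∞ :=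
  sInf {r : ℝ≥0∞ | ∃ (n : ℤ) (m : ℕ), 0 < m ∧ r = (2 : ℝ≥0∞) ^ (-(n : ℝ) / (m : ℝ)) ∧
    ∃ x ∈ X₀, f ^ m = ↑(u ^ n) * x}

private lemma subsemigroup_pow_mem {X : Type*} [CommMonoid X] (X₀ : Subsemigroup X)
    {x : X} (hx : x ∈ X₀) : ∀ m : ℕ, 0 < m → x ^ m ∈ X₀ := by
  intro m hm
  induction m with
  | zero => omega
  | succ k ih =>
    rcases Nat.eq_zero_or_pos k with h | h
    · simp [h, hx]
    · rw [pow_succ]; exact X₀.mul_mem (ih h) hx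

/-- For a weak pair of definition `(X₀, ϖ)` of a commutative monoid `X`, the generalized
gauge is power-multiplicative: `p(f^m) = p(f)^m` for all `f ∈ X` and all integers `m > 0`. -/
theorem generalized_gauge_pow_multiplicative {X : Type*} [CommMonoid X]
    (X₀ : Subsemigroup X) (u : Xˣ) (hmem : (u : X) ∈ X₀) (hinv : ((u⁻¹ : Xˣ) : X) ∉ X₀) :
    ∀ (f : X) (m : ℕ), 0 < m →
      genGauge (X₀ : Set X) u (f ^ m) = genGauge (X₀ : Set X) u f ^ m := by
  intro f m hm
  have hm' : (0 : ℝ) < (m : ℝ) := by exact_mod_cast hm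
  set S : Set ℝ≥0∞ := {r : ℝ≥0∞ | ∃ (n : ℤ) (m' : ℕ), 0 < m' ∧
      r = (2 : ℝ≥0∞) ^ (-(n : ℝ) / (m' : ℝ)) ∧ ∃ x ∈ (X₀ : Set X), f ^ m' = ↑(u ^ n) * x}
    with hS
  have hset : {r : ℝ≥0∞ | ∃ (n : ℤ) (m' : ℕ), 0 < m' ∧
      r = (2 : ℝ≥0∞) ^ (-(n : ℝ) / (m' : ℝ)) ∧
      ∃ x ∈ (X₀ : Set X), (f ^ m) ^ m' = ↑(u ^ n) * x}
      = (fun r : ℝ≥0∞ => r ^ (m : ℝ)) '' S := by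
    ext r
    constructor
    · rintro ⟨n, m', hmm', rfl, x, hx, hfx⟩
      have hmm : 0 < m * m' := Nat.mul_pos hm hmm'
      refine ⟨(2 : ℝ≥0∞) ^ (-(n : ℝ) / ((m * m' : ℕ) : ℝ)),
        ⟨n, m * m', hmm, rfl, x, hx, by rwa [pow_mul]⟩, ?_⟩
      have hm'' : (0 : ℝ) < (m' : ℝ) := by exact_mod_cast hmm'
      show ((2 : ℝ≥0∞) ^ (-(n : ℝ) / ((m * m' : ℕ) : ℝ))) ^ (m : ℝ) = _
      rw [← ENNReal.rpow_mul]
      congr 1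
      push_cast
      field_simp
    · rintro ⟨s, ⟨n, m', hmm', rfl, x, hx, hfx⟩, rfl⟩
      have hm'' : (0 : ℝ) < (m' : ℝ) := by exact_mod_cast hmm'
      refine ⟨n * m, m', hmm', ?_, x ^ m, subsemigroup_pow_mem X₀ hx m hm, ?_⟩
      · show ((2 : ℝ≥0∞) ^ (-(n : ℝ) / (m' : ℝ))) ^ (m : ℝ) = _
        rw [← ENNReal.rpow_mul]
        congr 1
        push_cast
        field_simp
      · have : (f ^ m) ^ m' = (f ^ m') ^ m := by
          rw [← pow_mul, ← pow_mul, Nat.mul_comm]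
        rw [this, hfx, mul_pow, ← Units.val_pow_eq_pow_val, ← zpow_natCast (u ^ n) m,
          ← zpow_mul]
  have key : genGauge (X₀ : Set X) u (f ^ m)
      = sInf ((fun r : ℝ≥0∞ => r ^ (m : ℝ)) '' S) := by
    rw [genGauge, hset]
  rw [key]
  have := (ENNReal.orderIsoRpow (m : ℝ) hm').map_sInf S
  simp only [ENNReal.orderIsoRpow_apply] at this
  rw [sInf_image, ← this, ENNReal.rpow_natCast]
  rfl
end

section
/- Let X be a commutative monoid and μ : X → ℝ≥0 a submultiplicative function with μ(1) = 1 (a monoid seminorm). If there exists an integer k ≥ 2 such that μ(f^k) = μ(f)^k for all f ∈ X, then μ is power-multiplicative, i.e., μ(f^m) = μ(f)^m for all f ∈ X and all integers m ≥ 1. -/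
open scoped NNReal

/-!
Iterating `μ(f^k) = μ(f)^k` gives `μ(f^n) = μ(f)^n` for `n = k^m ≥ m`. Splitting
`f^n = f^m · f^(n-m)` and using submultiplicativity,
`μ(f)^n ≤ μ(f^m) μ(f)^(n-m)`; cancelling `μ(f)^(n-m)` (when `μ(f) ≠ 0`) gives
`μ(f)^m ≤ μ(f^m)`, the reverse inequality being submultiplicativity again.
-/

theorem le_pow_of_submultiplicative {M N : Type*} [Monoid M] [CommMonoid N] [Preorder N]
    [IsOrderedMonoid N] (μ : M → N) (h_one : μ 1 ≤ 1) (h_mul : ∀ a b, μ (a * b) ≤ μ a * μ b)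
    (a : M) (n : ℕ) : μ (a ^ n) ≤ μ a ^ n := by
  simpa using (List.replicate n a).le_prod_of_submultiplicative μ h_one h_mul

theorem map_pow_pow_eq_of_map_pow_eq {M N : Type*} [Monoid M] [Monoid N] (μ : M → N) {k : ℕ}
    (hpow : ∀ a, μ (a ^ k) = μ a ^ k) (a : M) (j : ℕ) : μ (a ^ k ^ j) = μ a ^ k ^ j := by
  induction j with
  | zero => simp
  | succ j ih => rw [pow_succ, pow_mul, hpow, ih, ← pow_mul]

theorem map_pow_eq_of_map_pow_eq_of_le {M : Type*} [Monoid M] (μ : M → ℝ≥0) (h_one : μ 1 ≤ 1)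
    (h_mul : ∀ a b, μ (a * b) ≤ μ a * μ b) {a : M} {m n : ℕ} (hm : m ≠ 0) (hmn : m ≤ n)
    (hn : μ (a ^ n) = μ a ^ n) : μ (a ^ m) = μ a ^ m := by
  refine (le_pow_of_submultiplicative μ h_one h_mul a m).antisymm ?_
  rcases eq_or_ne (μ a) 0 with ha | ha
  · simp [ha, hm]
  have hsplit : μ a ^ m * μ a ^ (n - m) ≤ μ (a ^ m) * μ a ^ (n - m) :=
    calc μ a ^ m * μ a ^ (n - m) = μ (a ^ m * a ^ (n - m)) := by
          rw [← pow_add, ← pow_add, Nat.add_sub_cancel' hmn, hn]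
      _ ≤ μ (a ^ m) * μ (a ^ (n - m)) := h_mul _ _
      _ ≤ μ (a ^ m) * μ a ^ (n - m) := by
          gcongr; exact le_pow_of_submultiplicative μ h_one h_mul a _
  exact le_of_mul_le_mul_right hsplit (pow_pos (pos_iff_ne_zero.mpr ha) _)

/-- A monoid seminorm `μ` on a commutative monoid `X` (a submultiplicative function with
`μ(1) = 1`) is power-multiplicative as soon as there is a single integer `k ≥ 2` with
`μ(f^k) = μ(f)^k` for all `f`. -/
theorem powerMultiplicative_of_pow_eq {X : Type*} [CommMonoid X] (μ : X → ℝ≥0)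
    (hsub : ∀ f g : X, μ (f * g) ≤ μ f * μ g) (hone : μ 1 = 1)
    (k : ℕ) (hk : 2 ≤ k) (hpow : ∀ f : X, μ (f ^ k) = μ f ^ k) :
    ∀ (f : X) (m : ℕ), 1 ≤ m → μ (f ^ m) = μ f ^ m := by
  intro f m hm
  have hm_le : m ≤ k ^ m := (Nat.lt_pow_self hk).le
  exact map_pow_eq_of_map_pow_eq_of_le μ hone.le hsub (by omega) hm_le
    (map_pow_pow_eq_of_map_pow_eq μ hpow f m)
end

section
/- Let X be a commutative monoid, ϖ ∈ X a unit, and ν : X → ℝ≥0 a power-multiplicative function satisfying ν(ϖ^n f) ≤ 2^(-n) ν(f) for all f ∈ X and all n ∈ ℤ. If the open unit ball X_{ν<1} = {f : ν(f) < 1} and the closed unit ball X_{ν≤1} = {f : ν(f) ≤ 1} are subsemigroups of X, then ν coincides with the generalized gauge of (X_{ν<1}, ϖ) and with the generalized gauge of (X_{ν≤1}, ϖ). In particular, two such power-multiplicative functions with the same open (or closed) unit ball are equal. -/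
open scoped NNReal ENNReal

/-- Dyadic rationals with rational exponents are dense in the positive reals. -/
lemma exists_rat_rpow_btwn {c r : ℝ} (hc : 0 ≤ c) (hr : c < r) :
    ∃ q : ℚ, c < (2:ℝ) ^ (q:ℝ) ∧ (2:ℝ) ^ (q:ℝ) < r := by
  have hr0 : 0 < r := lt_of_le_of_lt hc hr
  rcases eq_or_lt_of_le hc with hc0 | hc0
  · obtain ⟨q, hq⟩ := exists_rat_lt (Real.logb 2 r)
    refine ⟨q, ?_, ?_⟩
    · rw [← hc0]; positivity
    · calc (2:ℝ) ^ (q:ℝ) < 2 ^ (Real.logb 2 r) :=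
            Real.rpow_lt_rpow_left_iff (by norm_num) |>.2 hq
        _ = r := Real.rpow_logb (by norm_num) (by norm_num) hr0
  · obtain ⟨q, hq1, hq2⟩ := exists_rat_btwn
      (Real.strictMonoOn_logb (b := 2) (by norm_num) |>.lt_iff_lt
        (Set.mem_Ioi.2 hc0) (Set.mem_Ioi.2 hr0) |>.2 hr)
    refine ⟨q, ?_, ?_⟩
    · calc c = 2 ^ (Real.logb 2 c) := (Real.rpow_logb (by norm_num) (by norm_num) hc0).symm
        _ < 2 ^ (q:ℝ) := Real.rpow_lt_rpow_left_iff (by norm_num) |>.2 hq1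
    · calc (2:ℝ) ^ (q:ℝ) < 2 ^ (Real.logb 2 r) :=
            Real.rpow_lt_rpow_left_iff (by norm_num) |>.2 hq2
        _ = r := Real.rpow_logb (by norm_num) (by norm_num) hr0

/-- Main computation: if `ν(u^n x) = 2^(-n) ν x` holds with equality and `X₀` is squeezed
between the open and closed unit balls of `ν`, then `ν` equals the generalized gauge of
`(X₀, u)`. -/
lemma gauge_eq_aux {X : Type*} [CommMonoid X] (u : Xˣ) (ν : X → ℝ≥0)
    (hpm : ∀ (f : X) (m : ℕ), 0 < m → ν (f ^ m) = ν f ^ m)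
    (hmul : ∀ (n : ℤ) (x : X), ν (↑(u ^ n) * x) = (2 : ℝ≥0) ^ (-n) * ν x)
    (X₀ : Set X) (hsub : ∀ x, ν x < 1 → x ∈ X₀) (hbd : ∀ x ∈ X₀, ν x ≤ 1) (f : X) :
    (ν f : ℝ≥0∞) = genGauge X₀ u f := by
  refine le_antisymm (le_sInf ?_) ?_
  · rintro r ⟨n, m, hm, rfl, x, hx, hfx⟩
    -- lower bound: ν f ≤ 2^(-n/m)
    have h1 : (ν f) ^ m ≤ (2 : ℝ≥0) ^ (-n) := by
      calc (ν f) ^ m = ν (f ^ m) := (hpm f m hm).symm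
        _ = (2:ℝ≥0) ^ (-n) * ν x := by rw [hfx, hmul]
        _ ≤ (2:ℝ≥0) ^ (-n) * 1 := by gcongr; exact hbd x hx
        _ = (2:ℝ≥0) ^ (-n) := mul_one _
    -- pass to ℝ
    have h2 : ((ν f : ℝ)) ^ m ≤ (2 : ℝ) ^ (-(n:ℝ)) := by
      have h2' : ((ν f : ℝ)) ^ m ≤ ((2:ℝ)) ^ (-n : ℤ) := by exact_mod_cast h1
      rwa [show (-(n:ℝ)) = ((-n : ℤ) : ℝ) by push_cast; ring, Real.rpow_intCast]
    have hm0 : (m : ℝ) ≠ 0 := Nat.cast_ne_zero.2 hm.ne'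
    have h3 : (ν f : ℝ) ≤ (2 : ℝ) ^ (-(n:ℝ) / m) := by
      have := Real.rpow_le_rpow (by positivity) h2 (le_of_lt (by positivity : (0:ℝ) < (m:ℝ)⁻¹))
      rwa [← Real.rpow_natCast (ν f : ℝ) m, ← Real.rpow_mul (ν f).coe_nonneg,
        mul_inv_cancel₀ hm0, Real.rpow_one, ← Real.rpow_mul (by norm_num), ← div_eq_mul_inv]
        at this
    -- back to ℝ≥0∞
    calc (ν f : ℝ≥0∞) ≤ ((2:ℝ≥0) ^ (-(n:ℝ)/m) : ℝ≥0) := by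
          exact_mod_cast (NNReal.coe_le_coe (r₂ := (2:ℝ≥0) ^ (-(n:ℝ)/m))).1
            (by rwa [NNReal.coe_rpow, NNReal.coe_ofNat])
      _ = (2:ℝ≥0∞) ^ (-(n:ℝ)/m) := by
          rw [ENNReal.coe_rpow_of_ne_zero two_ne_zero, ENNReal.coe_ofNat]
  · -- upper bound
    refine le_of_forall_gt_imp_ge_of_dense fun b hb => ?_
    obtain ⟨r, hr1, hr2⟩ := ENNReal.lt_iff_exists_nnreal_btwn.1 hb
    have hr1' : (ν f : ℝ) < r := by exact_mod_cast hr1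
    obtain ⟨q, hq1, hq2⟩ := exists_rat_rpow_btwn (ν f).coe_nonneg hr1'
    -- the candidate element
    set n : ℤ := -q.num with hn
    set m : ℕ := q.den with hmdef
    have hm : 0 < m := q.pos
    have hexp : -(n : ℝ) / (m : ℝ) = (q : ℝ) := by
      rw [hn, hmdef, Rat.cast_def]; push_cast; ring
    have hx : ν (↑(u ^ (-n)) * f ^ m) < 1 := by
      rw [hmul, hpm f m hm]
      have hcm : ((ν f : ℝ)) ^ m < (2:ℝ) ^ ((q:ℝ) * m) := by
        calc ((ν f : ℝ)) ^ m < ((2:ℝ) ^ (q:ℝ)) ^ m :=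
              pow_lt_pow_left₀ hq1 (ν f).coe_nonneg hm.ne'
          _ = (2:ℝ) ^ ((q:ℝ) * m) := by
              rw [← Real.rpow_natCast ((2:ℝ) ^ (q:ℝ)) m, ← Real.rpow_mul (by norm_num)]
      have hqm : (q : ℝ) * m = (q.num : ℝ) := by
        rw [hmdef, Rat.cast_def, div_mul_cancel₀]
        exact Nat.cast_ne_zero.2 q.den_nz
      rw [hqm] at hcm
      rw [neg_neg, hn, ← NNReal.coe_lt_coe]
      push_cast
      rw [← Real.rpow_intCast 2 (-q.num)]
      push_cast
      calc (2:ℝ) ^ (-(q.num:ℝ)) * (ν f : ℝ) ^ m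
            < (2:ℝ) ^ (-(q.num:ℝ)) * (2:ℝ) ^ ((q.num:ℝ)) :=
              mul_lt_mul_of_pos_left hcm (by positivity)
        _ = 1 := by rw [← Real.rpow_add (by norm_num)]; norm_num
    have hmem : (2:ℝ≥0∞) ^ (-(n:ℝ)/(m:ℝ)) ∈
        {r : ℝ≥0∞ | ∃ (n : ℤ) (m : ℕ), 0 < m ∧ r = (2 : ℝ≥0∞) ^ (-(n : ℝ) / (m : ℝ)) ∧
          ∃ x ∈ X₀, f ^ m = ↑(u ^ n) * x} := by
      refine ⟨n, m, hm, rfl, ↑(u ^ (-n)) * f ^ m, hsub _ hx, ?_⟩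
      rw [← mul_assoc, ← Units.val_mul, ← zpow_add, add_neg_cancel, zpow_zero,
        Units.val_one, one_mul]
    refine le_trans (sInf_le hmem) ?_
    rw [hexp]
    calc (2:ℝ≥0∞) ^ (q:ℝ) = ((2:ℝ≥0) ^ (q:ℝ) : ℝ≥0) := by
          rw [ENNReal.coe_rpow_of_ne_zero two_ne_zero, ENNReal.coe_ofNat]
      _ ≤ (r : ℝ≥0∞) := by
          refine ENNReal.coe_le_coe.2 ?_
          rw [← NNReal.coe_le_coe, NNReal.coe_rpow, NNReal.coe_ofNat]
          exact hq2.le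
      _ ≤ b := hr2.le

/-- A power-multiplicative function `ν : X → ℝ≥0` on a commutative monoid with a unit `ϖ = u`
satisfying `ν(ϖ^n f) ≤ 2^(-n) ν(f)` for all `n ∈ ℤ`, whose open and closed unit balls are
subsemigroups, coincides with the generalized gauge of `(X_{ν<1}, ϖ)` and with the
generalized gauge of `(X_{ν≤1}, ϖ)`.  In particular, two such power-multiplicative
functions with the same open (or closed) unit ball are equal. -/
theorem powerMultiplicative_eq_genGauge {X : Type*} [CommMonoid X] (u : Xˣ) (ν : X → ℝ≥0)
    (hpm : ∀ (f : X) (m : ℕ), 0 < m → ν (f ^ m) = ν f ^ m)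
    (hu : ∀ (n : ℤ) (f : X), ν (↑(u ^ n) * f) ≤ (2 : ℝ≥0) ^ (-n) * ν f)
    (hopen : ∀ a b : X, ν a < 1 → ν b < 1 → ν (a * b) < 1)
    (hclosed : ∀ a b : X, ν a ≤ 1 → ν b ≤ 1 → ν (a * b) ≤ 1) :
    (∀ f : X, (ν f : ℝ≥0∞) = genGauge {x : X | ν x < 1} u f) ∧
    (∀ f : X, (ν f : ℝ≥0∞) = genGauge {x : X | ν x ≤ 1} u f) := by
  have hmul : ∀ (n : ℤ) (x : X), ν (↑(u ^ n) * x) = (2 : ℝ≥0) ^ (-n) * ν x := by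
    intro n x
    refine le_antisymm (hu n x) ?_
    have h2 := hu (-n) (↑(u ^ n) * x)
    rw [← mul_assoc, ← Units.val_mul, ← zpow_add, neg_add_cancel, zpow_zero,
      Units.val_one, one_mul, neg_neg] at h2
    calc (2:ℝ≥0) ^ (-n) * ν x ≤ (2:ℝ≥0) ^ (-n) * ((2:ℝ≥0) ^ n * ν (↑(u ^ n) * x)) := by
          gcongr
      _ = ν (↑(u ^ n) * x) := by
          rw [← mul_assoc, ← zpow_add₀ (two_ne_zero), neg_add_cancel, zpow_zero, one_mul]
  constructor
  · exact fun f => gauge_eq_aux u ν hpm hmul _ (fun x hx => hx) (fun x hx => le_of_lt hx) f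
  · exact fun f => gauge_eq_aux u ν hpm hmul _ (fun x hx => le_of_lt hx) (fun x hx => hx) f
end

section
/- Let A be a commutative ring, ϖ ∈ A a non-zero-divisor, and let I be a cancellative A-submodule of A[ϖ⁻¹] (i.e., IJ = IK implies J = K for A-submodules J, K of A[ϖ⁻¹]). If 𝔪₁, ..., 𝔪_k are finitely many pairwise distinct maximal ideals of A, then the union 𝔪₁I ∪ ... ∪ 𝔪_kI is strictly contained in I. -/
/-- Let `ϖ` be a non-zero-divisor of the commutative ring `A` and let `I` be a cancellative
`A`-submodule of `A[ϖ⁻¹]` (`I·J = I·K` implies `J = K`).  If `𝔪 1, …, 𝔪 k` are finitely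
many pairwise distinct maximal ideals of `A`, then `𝔪₁I ∪ ⋯ ∪ 𝔪_k I ⊊ I`. -/
theorem union_maximal_smul_ssubset {A : Type*} [CommRing A] (ϖ : A)
    (hϖ : ϖ ∈ nonZeroDivisors A) (I : Submodule A (Localization.Away ϖ))
    (hc : ∀ J K : Submodule A (Localization.Away ϖ), I * J = I * K → J = K)
    (k : ℕ) (𝔪 : Fin k → Ideal A) (hmax : ∀ i, (𝔪 i).IsMaximal)
    (hinj : Function.Injective 𝔪) :
    (⋃ i, ((𝔪 i • I : Submodule A (Localization.Away ϖ)) : Set (Localization.Away ϖ)))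
      ⊂ (I : Set (Localization.Away ϖ)) := by
  set L := Localization.Away ϖ
  have halg : Function.Injective (algebraMap A L) :=
    IsLocalization.injective _ (Submonoid.powers_le.mpr hϖ)
  -- key algebra fact: I * (J • 1) = J • I
  have hmul : ∀ (J : Ideal A), I * (J • (1 : Submodule A L)) = J • I := by
    intro J
    apply le_antisymm
    · rw [Submodule.mul_le]
      intro x hx y hy
      refine Submodule.smul_induction_on hy ?_ ?_
      · intro m hm b hb
        obtain ⟨a, rfl⟩ := Submodule.mem_one.mp hb
        have : x * (m • algebraMap A L a) = m • (a • x) := by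
          rw [mul_smul_comm, mul_comm, ← Algebra.smul_def]
        rw [this]
        exact Submodule.smul_mem_smul hm (I.smul_mem a hx)
      · intro u v hu hv; rw [mul_add]; exact add_mem hu hv
    · refine Submodule.smul_le.mpr fun m hm x hx => ?_
      have : m • x = x * (m • (1 : L)) := by rw [mul_smul_comm, mul_one]
      rw [this]
      exact Submodule.mul_mem_mul hx
        (Submodule.smul_mem_smul hm (Submodule.one_le.mp le_rfl))
  -- each 𝔪 i • I is a proper submodule of I
  have hproper : ∀ i, 𝔪 i • I ≠ I := by
    intro i heq
    have h1 : I * (𝔪 i • (1 : Submodule A L)) = I * 1 := by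
      rw [hmul, heq, mul_one]
    have h2 : 𝔪 i • (1 : Submodule A L) = 1 := hc _ _ h1
    have h3 : (1 : L) ∈ 𝔪 i • (1 : Submodule A L) := by
      rw [h2]; exact Submodule.one_le.mp le_rfl
    have h4 : 𝔪 i • (1 : Submodule A L) ≤ Submodule.map (Algebra.linearMap A L) (𝔪 i) := by
      refine Submodule.smul_le.mpr fun m hm b hb => ?_
      obtain ⟨a, rfl⟩ := Submodule.mem_one.mp hb
      have : m • algebraMap A L a = Algebra.linearMap A L (m * a) := by
        simp [Algebra.smul_def, map_mul]
      rw [this]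
      exact Submodule.mem_map_of_mem ((𝔪 i).mul_mem_right a hm)
    obtain ⟨a, ha, hae⟩ := Submodule.mem_map.mp (h4 h3)
    have : a = 1 := halg (by simpa using hae)
    exact (hmax i).ne_top (Ideal.eq_top_iff_one _ |>.mpr (this ▸ ha))
  -- pick xᵢ ∈ I \ 𝔪ᵢ • I
  have hex : ∀ i, ∃ x, x ∈ I ∧ x ∉ 𝔪 i • I := by
    intro i
    have hlt : 𝔪 i • I < I := lt_of_le_of_ne Submodule.smul_le_right (hproper i)
    obtain ⟨x, hxI, hx⟩ := SetLike.exists_of_lt hlt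
    exact ⟨x, hxI, hx⟩
  choose x hxI hxnot using hex
  -- CRT elements
  have key : ∀ i : Fin k, ∃ e : A, e - 1 ∈ 𝔪 i ∧ ∀ j, j ≠ i → e ∈ 𝔪 j := by
    intro i
    have hb : ∀ j : Fin k, ∃ b : A,
        j ≠ i → b ∈ 𝔪 j ∧ (Ideal.Quotient.mk (𝔪 i)) b = 1 := by
      intro j
      by_cases h : j = i
      · exact ⟨0, fun hj => absurd h hj⟩
      · have hsup : 𝔪 i ⊔ 𝔪 j = ⊤ :=
          (hmax i).coprime_of_ne (hmax j) (hinj.ne (Ne.symm h))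
        have hco : IsCoprime (𝔪 i) (𝔪 j) := Ideal.isCoprime_iff_sup_eq.mpr hsup
        obtain ⟨a, ha, b, hbj, hab⟩ := Ideal.isCoprime_iff_exists.mp hco
        refine ⟨b, fun _ => ⟨hbj, ?_⟩⟩
        have := congrArg (Ideal.Quotient.mk (𝔪 i)) hab
        simpa [Ideal.Quotient.eq_zero_iff_mem.mpr ha] using this
    choose b hbprop using hb
    refine ⟨∏ j ∈ Finset.univ.erase i, b j, ?_, ?_⟩
    · have : Ideal.Quotient.mk (𝔪 i) (∏ j ∈ Finset.univ.erase i, b j) =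
          Ideal.Quotient.mk (𝔪 i) 1 := by
        rw [map_prod, map_one]
        exact Finset.prod_eq_one fun j hj => (hbprop j (Finset.ne_of_mem_erase hj)).2
      exact Ideal.Quotient.eq.mp this
    · intro j hj
      have hjmem : j ∈ Finset.univ.erase i := Finset.mem_erase.mpr ⟨hj, Finset.mem_univ j⟩
      rw [← Finset.prod_erase_mul _ _ hjmem]
      exact (𝔪 j).mul_mem_left _ (hbprop j hj).1
  choose e he1 he2 using key
  -- the element avoiding all 𝔪 i • I
  set z : L := ∑ i, e i • x i with hz
  have hzI : z ∈ I := Submodule.sum_mem I fun i _ => I.smul_mem _ (hxI i)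
  have hznot : ∀ i, z ∉ 𝔪 i • I := by
    intro i hzmem
    apply hxnot i
    have h1 : x i = z - ((e i - 1) • x i + ∑ j ∈ Finset.univ.erase i, e j • x j) := by
      rw [hz, ← Finset.sum_erase_add _ _ (Finset.mem_univ i), sub_smul, one_smul]
      abel
    rw [h1]
    refine sub_mem hzmem (add_mem ?_ ?_)
    · exact Submodule.smul_mem_smul (he1 i) (hxI i)
    · exact Submodule.sum_mem _ fun j hj =>
        Submodule.smul_mem_smul (he2 j i (Finset.ne_of_mem_erase hj).symm) (hxI j)
  constructor
  · intro y hy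
    simp only [Set.mem_iUnion, SetLike.mem_coe] at hy
    obtain ⟨i, hi⟩ := hy
    exact Submodule.smul_le_right hi
  · intro hsub
    have := hsub hzI
    simp only [Set.mem_iUnion, SetLike.mem_coe] at this
    obtain ⟨i, hi⟩ := this
    exact hznot i hi
end

section
/- Let A be a local commutative ring and ϖ ∈ A a non-zero-divisor lying in the Jacobson radical of A (ϖ-adically Zariskian). Then the following are equivalent: (1) for every f ∈ A and every n ≥ 1, either ϖ^n ∈ (f)A or f ∈ (ϖ^n)A; (2) the quotient A / (⋂_{n≥1} ϖ^n A) is a valuation ring. -/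
/-!
Write `I = ⋂ ϖⁿA`. Under (1), since `ϖ` is a non-zero-divisor and not a unit, an element lies
outside `I` exactly when it divides some power of `ϖ`. Two divisors `u`, `v` of `p = ϖᴺ` are
comparable: with `p = v b`, condition (1) compares `u b = p · (u / v)` with `p`, and cancelling
non-zero-divisors gives `u ∣ v` or `v ∣ u`. So the complement of `I` is multiplicatively closed and
totally ordered by divisibility, i.e. `A ⧸ I` is a valuation ring. Conversely, `f g ≡ ϖⁿ` modulo
`I ⊆ ϖⁿ⁺¹A` gives `f g = ϖⁿ (1 + ϖ t)`, and `1 + ϖ t` is a unit because `ϖ` lies in the Jacobson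
radical.
-/

open Ideal.Quotient
open scoped nonZeroDivisors

section

variable {A : Type*} [CommRing A]

lemma mem_nonZeroDivisors_of_dvd {a b : A} (hb : b ∈ A⁰) (h : a ∣ b) : a ∈ A⁰ := by
  obtain ⟨c, rfl⟩ := h
  exact (mul_mem_nonZeroDivisors.mp hb).1

lemma dvd_or_dvd_of_dvd_or_dvd_mul_cofactor {p u v a b : A} (hp : p ∈ A⁰)
    (hua : p = u * a) (hvb : p = v * b) (h : u * b ∣ p ∨ p ∣ u * b) : u ∣ v ∨ v ∣ u := by
  have hb : b ∈ A⁰ := mem_nonZeroDivisors_of_dvd hp ⟨v, by rw [hvb, mul_comm]⟩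
  rcases h with h | h
  · rw [hvb] at h
    exact .inl ((dvd_cancel_right_mem_nonZeroDivisors hb).mp h)
  · have ha : a ∈ A⁰ := mem_nonZeroDivisors_of_dvd hp ⟨u, by rw [hua, mul_comm]⟩
    rw [hua, dvd_cancel_left_mem_nonZeroDivisors (mem_nonZeroDivisors_of_dvd hp ⟨a, hua⟩)] at h
    refine .inr ((dvd_cancel_right_mem_nonZeroDivisors ha).mp ?_)
    rw [← hua, hvb]
    exact mul_dvd_mul_left v h

namespace Ideal.Quotient

lemma dvd_of_mk_dvd_mk {I : Ideal A} {a b : A} (hI : I ≤ Ideal.span {a})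
    (h : mk I a ∣ mk I b) : a ∣ b := by
  obtain ⟨c, hc⟩ := h
  obtain ⟨g, rfl⟩ := mk_surjective c
  rw [← map_mul, Ideal.Quotient.eq] at hc
  obtain ⟨t, ht⟩ := Ideal.mem_span_singleton.mp (hI hc)
  exact ⟨g + t, by linear_combination ht⟩

lemma dvd_of_mk_dvd_mk_of_le_span_mul {I : Ideal A} {a b r : A}
    (hr : r ∈ (⊥ : Ideal A).jacobson) (hI : I ≤ Ideal.span {b * r})
    (h : mk I a ∣ mk I b) : a ∣ b := by
  obtain ⟨c, hc⟩ := h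
  obtain ⟨g, rfl⟩ := mk_surjective c
  rw [← map_mul, Ideal.Quotient.eq] at hc
  obtain ⟨t, ht⟩ := Ideal.mem_span_singleton.mp (hI hc)
  obtain ⟨w, hw⟩ := Ideal.mem_jacobson_bot.mp hr (-t)
  have hag : a * g = b * w := by rw [hw]; linear_combination -ht
  exact ⟨g * ↑w⁻¹, by rw [← mul_assoc, hag, mul_assoc, w.mul_inv, mul_one]⟩

lemma valuationRing_of_dvd_or_dvd {I : Ideal A} [I.IsPrime]
    (h : ∀ x y, x ∉ I → y ∉ I → x ∣ y ∨ y ∣ x) : ValuationRing (A ⧸ I) := by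
  refine ValuationRing.iff_dvd_total.mpr ⟨fun a b => ?_⟩
  obtain ⟨x, rfl⟩ := mk_surjective a
  obtain ⟨y, rfl⟩ := mk_surjective b
  by_cases hx : x ∈ I
  · exact .inr ((eq_zero_iff_mem.mpr hx).symm ▸ dvd_zero _)
  by_cases hy : y ∈ I
  · exact .inl ((eq_zero_iff_mem.mpr hy).symm ▸ dvd_zero _)
  exact (h x y hx hy).imp (map_dvd _) (map_dvd _)

end Ideal.Quotient

def iInfSpanPow (ϖ : A) : Ideal A := ⨅ (n : ℕ) (_ : 1 ≤ n), Ideal.span {ϖ ^ n}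

lemma mem_iInfSpanPow {ϖ x : A} : x ∈ iInfSpanPow ϖ ↔ ∀ n, ϖ ^ n ∣ x := by
  simp only [iInfSpanPow, Ideal.mem_iInf, Ideal.mem_span_singleton]
  refine ⟨fun h n => ?_, fun h n _ => h n⟩
  rcases n.eq_zero_or_pos with rfl | hn
  · exact pow_zero ϖ ▸ one_dvd x
  · exact h n hn

lemma iInfSpanPow_le_span_pow {ϖ : A} {n : ℕ} (hn : 1 ≤ n) :
    iInfSpanPow ϖ ≤ Ideal.span {ϖ ^ n} :=
  iInf₂_le n hn

lemma pow_notMem_iInfSpanPow {ϖ : A} (hϖ : ϖ ∈ A⁰) (hϖu : ¬IsUnit ϖ) (n : ℕ) :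
    ϖ ^ n ∉ iInfSpanPow ϖ := by
  intro h
  obtain ⟨t, ht⟩ := mem_iInfSpanPow.mp h (n + 1)
  refine hϖu (IsUnit.of_mul_eq_one t ((mul_cancel_left_mem_nonZeroDivisors (pow_mem hϖ n)).mp ?_))
  rw [mul_one, ← mul_assoc, ← pow_succ, ← ht]

lemma notMem_iInfSpanPow_iff {ϖ x : A} (hϖ : ϖ ∈ A⁰) (hϖu : ¬IsUnit ϖ)
    (H : ∀ f n, f ∣ ϖ ^ n ∨ ϖ ^ n ∣ f) : x ∉ iInfSpanPow ϖ ↔ ∃ n, x ∣ ϖ ^ n := by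
  refine ⟨fun hx => ?_, fun ⟨n, hn⟩ hx => pow_notMem_iInfSpanPow hϖ hϖu n ?_⟩
  · obtain ⟨n, hn⟩ := not_forall.mp (mt mem_iInfSpanPow.mpr hx)
    exact ⟨n, (H x n).resolve_right hn⟩
  · exact Ideal.mem_of_dvd _ hn hx

lemma isPrime_iInfSpanPow {ϖ : A} (hϖ : ϖ ∈ A⁰) (hϖu : ¬IsUnit ϖ)
    (H : ∀ f n, f ∣ ϖ ^ n ∨ ϖ ^ n ∣ f) : (iInfSpanPow ϖ).IsPrime := by
  refine Ideal.isPrime_iff.mpr ⟨(Ideal.ne_top_iff_one _).mpr ?_, fun {x y} hxy => ?_⟩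
  · simpa using pow_notMem_iInfSpanPow hϖ hϖu 0
  · by_contra! hxy'
    obtain ⟨n, hn⟩ := (notMem_iInfSpanPow_iff hϖ hϖu H).mp hxy'.1
    obtain ⟨m, hm⟩ := (notMem_iInfSpanPow_iff hϖ hϖu H).mp hxy'.2
    exact (notMem_iInfSpanPow_iff hϖ hϖu H).mpr ⟨n + m, pow_add ϖ n m ▸ mul_dvd_mul hn hm⟩ hxy

lemma dvd_or_dvd_of_notMem_iInfSpanPow {ϖ x y : A} (hϖ : ϖ ∈ A⁰) (hϖu : ¬IsUnit ϖ)
    (H : ∀ f n, f ∣ ϖ ^ n ∨ ϖ ^ n ∣ f) (hx : x ∉ iInfSpanPow ϖ) (hy : y ∉ iInfSpanPow ϖ) :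
    x ∣ y ∨ y ∣ x := by
  obtain ⟨n, hn⟩ := (notMem_iInfSpanPow_iff hϖ hϖu H).mp hx
  obtain ⟨m, hm⟩ := (notMem_iInfSpanPow_iff hϖ hϖu H).mp hy
  obtain ⟨a, ha⟩ := hn.trans (pow_dvd_pow ϖ (n.le_add_right m))
  obtain ⟨b, hb⟩ := hm.trans (pow_dvd_pow ϖ (m.le_add_left n))
  exact dvd_or_dvd_of_dvd_or_dvd_mul_cofactor (pow_mem hϖ _) ha hb (H _ _)

end

/-- Let `A` be a local ring and `ϖ ∈ A` a non-zero-divisor lying in the Jacobson radical.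
Then the following are equivalent: (1) for every `f ∈ A` and `n ≥ 1`, either
`ϖ^n ∈ (f)` or `f ∈ (ϖ^n)`; (2) the separated quotient `A / ⋂_{n≥1} ϖ^n A` is a
valuation ring (in particular an integral domain). -/
theorem local_piValuative_iff_quotient_valuationRing {A : Type*} [CommRing A]
    [IsLocalRing A] (ϖ : A) (hϖ : ϖ ∈ nonZeroDivisors A)
    (hjac : ϖ ∈ (⊥ : Ideal A).jacobson) :
    (∀ (f : A) (n : ℕ), 1 ≤ n → ϖ ^ n ∈ Ideal.span {f} ∨ f ∈ Ideal.span {ϖ ^ n}) ↔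
      ∃ hd : IsDomain (A ⧸ (⨅ (n : ℕ) (_ : 1 ≤ n), Ideal.span {ϖ ^ n})),
        @ValuationRing (A ⧸ (⨅ (n : ℕ) (_ : 1 ≤ n), Ideal.span {ϖ ^ n})) _ hd := by
  have hϖu : ¬IsUnit ϖ := fun hu =>
    bot_ne_top (Ideal.jacobson_eq_top_iff.mp (Ideal.eq_top_of_isUnit_mem _ hjac hu))
  show _ ↔ ∃ hd : IsDomain (A ⧸ iInfSpanPow ϖ), @ValuationRing _ _ hd
  simp only [Ideal.mem_span_singleton]
  constructor
  · intro H
    have H' : ∀ f n, f ∣ ϖ ^ n ∨ ϖ ^ n ∣ f := fun f n =>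
      n.eq_zero_or_pos.elim (fun h => .inr (h ▸ pow_zero ϖ ▸ one_dvd f)) (H f n)
    have := isPrime_iInfSpanPow hϖ hϖu H'
    exact ⟨inferInstance, valuationRing_of_dvd_or_dvd fun _ _ =>
      dvd_or_dvd_of_notMem_iInfSpanPow hϖ hϖu H'⟩
  · rintro ⟨hd, hv⟩ f n hn
    rcases ValuationRing.dvd_total (mk (iInfSpanPow ϖ) f) (mk _ (ϖ ^ n)) with h | h
    · refine .inl (dvd_of_mk_dvd_mk_of_le_span_mul hjac ?_ h)
      exact pow_succ ϖ n ▸ iInfSpanPow_le_span_pow n.succ_pos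
    · exact .inr (dvd_of_mk_dvd_mk (iInfSpanPow_le_span_pow hn) h)
end

section
/- Let A be a commutative ring and ϖ ∈ A a non-zero-divisor and non-unit. For every n ≥ 0, (ϖ^n)A equals the intersection, over all weakly associated prime ideals 𝔭 of the ideal (ϖ), of the preimages under A[ϖ⁻¹] → A_𝔭[ϖ⁻¹] of ϖ^n A_𝔭. In particular, an element f ∈ A lies in (ϖ^n)A if and only if its image in A_𝔭 lies in ϖ^n A_𝔭 for every weakly associated prime 𝔭 of (ϖ). -/
/-!
Write `x = a / ϖ ^ m`. At every prime `𝔭`, `ϖ` stays a non-zero-divisor of `A_𝔭`, so `A_𝔭` embeds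
into `A_𝔭[ϖ⁻¹]` and the local hypothesis says that `ϖ ^ (m + n)` divides `a` in `A_𝔭`. Divisibility
by `ϖ` descends from these localizations: if `ϖ ∤ c`, then `(ϖ) :_A c` is proper and a minimal prime
`𝔭` over it is weakly associated, while `c ∈ ϖ A_𝔭` would give `s ∉ 𝔭` with `s ∈ (ϖ) :_A c ⊆ 𝔭`.
Cancelling one factor of `ϖ` at a time lifts this to `ϖ ^ (m + n) ∣ a`.
-/

/-- `𝔭` is a weakly associated prime of the principal ideal `(ϖ)`:
`𝔭` is minimal over `(ϖ) :_A f` for some `f ∈ A`. -/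
def IsWeaklyAssociatedPrimeOf {A : Type*} [CommRing A] (ϖ : A) (𝔭 : Ideal A) : Prop :=
  ∃ f : A, 𝔭 ∈ ((Ideal.span {ϖ}).colon (Ideal.span {f})).minimalPrimes

open nonZeroDivisors

theorem IsLocalization.Away.map_algebraMap {R S P Q : Type*} [CommSemiring R] [CommSemiring S]
    [CommSemiring P] [CommSemiring Q] [Algebra R S] [Algebra P Q] (f : R →+* P) (r : R)
    [IsLocalization.Away r S] [IsLocalization.Away (f r) Q] (y : R) :
    IsLocalization.Away.map S Q f r (algebraMap R S y) = algebraMap P Q (f y) :=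
  IsLocalization.map_eq _ _

theorem Ideal.mem_of_forall_minimalPrimes_colon {A : Type*} [CommRing A] {J : Ideal A} {b : A}
    (h : ∀ (𝔭 : Ideal A) [𝔭.IsPrime], 𝔭 ∈ (J.colon (Ideal.span {b})).minimalPrimes →
      algebraMap A (Localization.AtPrime 𝔭) b ∈ J.map (algebraMap A (Localization.AtPrime 𝔭))) :
    b ∈ J := by
  by_contra hb
  have hne : J.colon (Ideal.span {b}) ≠ ⊤ := by
    rwa [Ne, Ideal.eq_top_iff_one, Ideal.mem_colon_span_singleton, one_mul]
  obtain ⟨𝔭, h𝔭⟩ := Ideal.nonempty_minimalPrimes hne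
  have : 𝔭.IsPrime := h𝔭.1.1
  obtain ⟨s, hs, hsb⟩ :=
    (IsLocalization.algebraMap_mem_map_algebraMap_iff 𝔭.primeCompl _ J b).1 (h 𝔭 h𝔭)
  exact hs (h𝔭.1.2 (Ideal.mem_colon_span_singleton.2 hsb))

theorem pow_dvd_of_forall_weaklyAssociated {A : Type*} [CommRing A] {ϖ : A} (hϖ : ϖ ∈ A⁰)
    {b : A} (k : ℕ)
    (h : ∀ (𝔭 : Ideal A) [𝔭.IsPrime], IsWeaklyAssociatedPrimeOf ϖ 𝔭 →
      algebraMap A (Localization.AtPrime 𝔭) ϖ ^ k ∣ algebraMap A (Localization.AtPrime 𝔭) b) :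
    ϖ ^ k ∣ b := by
  induction k with
  | zero => simp
  | succ k ih =>
    obtain ⟨c, rfl⟩ := ih fun 𝔭 _ h𝔭 => (pow_dvd_pow _ k.le_succ).trans (h 𝔭 h𝔭)
    rw [pow_succ]
    refine mul_dvd_mul_left _ (Ideal.mem_span_singleton.1 ?_)
    refine Ideal.mem_of_forall_minimalPrimes_colon fun 𝔭 _ h𝔭 => ?_
    rw [Ideal.map_span, Set.image_singleton, Ideal.mem_span_singleton]
    have hϖ𝔭 := IsLocalization.nonZeroDivisors_le_comap 𝔭.primeCompl (Localization.AtPrime 𝔭) hϖ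
    rw [← dvd_cancel_left_mem_nonZeroDivisors (pow_mem hϖ𝔭 k), ← map_mul, ← map_mul, ← pow_succ,
      map_pow]
    exact h 𝔭 ⟨c, h𝔭⟩

theorem pow_add_dvd_of_away_map_eq {A B : Type*} [CommRing A] [CommRing B] [Algebra A B] {ϖ : A}
    (hϖ : algebraMap A B ϖ ∈ B⁰) {x : Localization.Away ϖ} {a : A} {m n : ℕ} {c : B}
    (hx : x * algebraMap A (Localization.Away ϖ) (ϖ ^ m) = algebraMap A (Localization.Away ϖ) a)
    (hc : IsLocalization.Away.map (Localization.Away ϖ) (Localization.Away (algebraMap A B ϖ))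
        (algebraMap A B) ϖ x =
      algebraMap A (Localization.Away (algebraMap A B ϖ)) ϖ ^ n *
        algebraMap B (Localization.Away (algebraMap A B ϖ)) c) :
    algebraMap A B ϖ ^ (m + n) ∣ algebraMap A B a := by
  set Q := Localization.Away (algebraMap A B ϖ)
  refine ⟨c, IsLocalization.injective Q (Submonoid.powers_le.2 hϖ) ?_⟩
  have hxQ := congrArg (IsLocalization.Away.map (Localization.Away ϖ) Q (algebraMap A B) ϖ) hx
  rw [map_mul, hc, IsLocalization.Away.map_algebraMap, IsLocalization.Away.map_algebraMap] at hxQ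
  rw [← hxQ]
  simp only [map_mul, map_pow, ← IsScalarTower.algebraMap_apply A B Q]
  ring

theorem pow_span_eq_iInter_weaklyAssociated_general {A : Type*} [CommRing A] (ϖ : A)
    (hϖ : ϖ ∈ nonZeroDivisors A) (n : ℕ)
    (x : Localization.Away ϖ) :
    (∃ a : A, x = algebraMap A (Localization.Away ϖ) ϖ ^ n *
        algebraMap A (Localization.Away ϖ) a) ↔
      ∀ (𝔭 : Ideal A) [𝔭.IsPrime], IsWeaklyAssociatedPrimeOf ϖ 𝔭 →
        ∃ a : Localization.AtPrime 𝔭,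
          (IsLocalization.Away.map (Localization.Away ϖ)
              (Localization.Away (algebraMap A (Localization.AtPrime 𝔭) ϖ))
              (algebraMap A (Localization.AtPrime 𝔭)) ϖ) x =
            algebraMap A (Localization.Away (algebraMap A (Localization.AtPrime 𝔭) ϖ)) ϖ ^ n *
              algebraMap (Localization.AtPrime 𝔭)
                (Localization.Away (algebraMap A (Localization.AtPrime 𝔭) ϖ)) a := by
  constructor
  · rintro ⟨a, rfl⟩ 𝔭 _ _
    refine ⟨algebraMap A _ a, ?_⟩
    rw [map_mul, map_pow, IsLocalization.Away.map_algebraMap, IsLocalization.Away.map_algebraMap,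
      ← IsScalarTower.algebraMap_apply, ← IsScalarTower.algebraMap_apply]
  · intro H
    obtain ⟨⟨a, _, m, rfl⟩, hx⟩ := IsLocalization.surj (Submonoid.powers ϖ) x
    obtain ⟨b, rfl⟩ : ϖ ^ (m + n) ∣ a := pow_dvd_of_forall_weaklyAssociated hϖ _ fun 𝔭 _ h𝔭 =>
      have ⟨_, hc⟩ := H 𝔭 h𝔭
      pow_add_dvd_of_away_map_eq
        (IsLocalization.nonZeroDivisors_le_comap 𝔭.primeCompl (Localization.AtPrime 𝔭) hϖ) hx hc
    refine ⟨b, ((IsLocalization.Away.algebraMap_isUnit ϖ).pow m).mul_left_cancel ?_⟩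
    rw [mul_comm, ← map_pow, hx]
    simp only [map_mul, map_pow]
    ring

/-- For a non-zero-divisor non-unit `ϖ` in a commutative ring `A` and every `n ≥ 0`:
an element `x` of `A[ϖ⁻¹]` lies in `ϖ^n·A` if and only if, for every weakly associated
prime `𝔭` of `(ϖ)`, the image of `x` in `A_𝔭[ϖ⁻¹]` lies in `ϖ^n·A_𝔭`.  (In particular,
`f ∈ A` lies in `(ϖ^n)` iff its image in `A_𝔭` lies in `ϖ^n A_𝔭` for all such `𝔭`.) -/
theorem pow_span_eq_iInter_weaklyAssociated {A : Type*} [CommRing A] (ϖ : A)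
    (hϖ : ϖ ∈ nonZeroDivisors A) (hnu : ¬IsUnit ϖ) (n : ℕ)
    (x : Localization.Away ϖ) :
    (∃ a : A, x = algebraMap A (Localization.Away ϖ) ϖ ^ n *
        algebraMap A (Localization.Away ϖ) a) ↔
      ∀ (𝔭 : Ideal A) [𝔭.IsPrime], IsWeaklyAssociatedPrimeOf ϖ 𝔭 →
        ∃ a : Localization.AtPrime 𝔭,
          (IsLocalization.Away.map (Localization.Away ϖ)
              (Localization.Away (algebraMap A (Localization.AtPrime 𝔭) ϖ))
              (algebraMap A (Localization.AtPrime 𝔭)) ϖ) x =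
            algebraMap A (Localization.Away (algebraMap A (Localization.AtPrime 𝔭) ϖ)) ϖ ^ n *
              algebraMap (Localization.AtPrime 𝔭)
                (Localization.Away (algebraMap A (Localization.AtPrime 𝔭) ϖ)) a :=
  pow_span_eq_iInter_weaklyAssociated_general ϖ hϖ n x
end

section
/- Let A be a Noetherian commutative ring, ϖ ∈ A a non-zero-divisor and non-unit, and assume A is integrally closed in the localization A[ϖ⁻¹]. Then every associated prime ideal of the ideal (ϖ) in A has height 1. -/
/-- A prime ideal of height one: a prime which is not a minimal prime of the ring, such
that every prime strictly below it is a minimal prime of the ring. -/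
def IsHeightOne {A : Type*} [CommRing A] (𝔭 : Ideal A) : Prop :=
  𝔭.IsPrime ∧ 𝔭 ∉ minimalPrimes A ∧
    ∀ 𝔮 : Ideal A, 𝔮.IsPrime → 𝔮 < 𝔭 → 𝔮 ∈ minimalPrimes A

/-!
Since `ϖ ∈ 𝔭 = (ϖ) : f`, the height of `𝔭` is at least one. If `f 𝔭 ⊆ ϖ 𝔭`, then
`ϖ (f / ϖ)ⁿ ∈ 𝔭` for all `n`, so `f / ϖ` is almost integral over the Noetherian ring `A`, hence
integral, hence in `A`; then `f ∈ (ϖ)` and `𝔭 = A`, which is absurd. So `f q = ϖ g` for some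
`q ∈ 𝔭` and `g ∉ 𝔭`; cancelling `ϖ` gives `g 𝔭 ⊆ (q)`, i.e. `𝔭 A_𝔭 = q A_𝔭`. Thus `𝔭` is
minimal over `(q)`, and Krull's principal ideal theorem bounds its height by one.
-/

open Ideal
open scoped nonZeroDivisors

section

variable {A : Type*} [CommRing A]

theorem isHeightOne_of_height_eq_one {𝔭 : Ideal A} [𝔭.IsPrime] (h : 𝔭.height = 1) :
    IsHeightOne 𝔭 := by
  have : 𝔭.FiniteHeight := (finiteHeight_iff 𝔭).mpr (Or.inr (by simp [h]))
  refine ⟨‹_›, fun hmin ↦ by simp [height_eq_zero_iff.mpr hmin] at h, fun 𝔮 _ h𝔮𝔭 ↦ ?_⟩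
  have := height_strict_mono_of_isPrime_of_isPrime h𝔮𝔭
  rw [h, Order.lt_one_iff] at this
  exact height_eq_zero_iff.mp this

theorem mem_minimalPrimes_span_singleton_of_mul_mem {𝔭 : Ideal A} [𝔭.IsPrime] {q g : A}
    (hq : q ∈ 𝔭) (hg : g ∉ 𝔭) (h : ∀ r ∈ 𝔭, g * r ∈ span {q}) :
    𝔭 ∈ (span {q}).minimalPrimes :=
  ⟨⟨‹_›, span_le.mpr (Set.singleton_subset_iff.mpr hq)⟩, fun _ ⟨h𝔮, hq𝔮⟩ h𝔮𝔭 r hr ↦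
    (h𝔮.mem_or_mem (hq𝔮 (h r hr))).resolve_left fun hg𝔮 ↦ hg (h𝔮𝔭 hg𝔮)⟩

theorem mul_mem_span_singleton_of_mem_colon {ϖ f q g r : A} (hϖ : ϖ ∈ A⁰)
    (hfq : f * q = ϖ * g) (hr : r ∈ (span {ϖ}).colon (span {f})) : g * r ∈ span {q} := by
  obtain ⟨h, hh⟩ := mem_span_singleton'.mp (mem_colon_span_singleton.mp hr)
  refine mem_span_singleton'.mpr ⟨h, (mul_cancel_right_mem_nonZeroDivisors hϖ).mp ?_⟩
  linear_combination q * hh + r * hfq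

theorem isAlmostIntegral_mk'_of_forall_mul_mem {S : Type*} [CommRing S] [Algebra A S] {ϖ f : A}
    [IsLocalization.Away ϖ S] (hϖ : ϖ ∈ A⁰) {I : Ideal A} (hϖI : ϖ ∈ I)
    (hfI : ∀ r ∈ I, ∃ s ∈ I, f * r = ϖ * s) :
    IsAlmostIntegral A
      (IsLocalization.mk' S f (⟨ϖ, Submonoid.mem_powers ϖ⟩ : Submonoid.powers ϖ)) := by
  set x := IsLocalization.mk' S f (⟨ϖ, Submonoid.mem_powers ϖ⟩ : Submonoid.powers ϖ)
  suffices ∀ n : ℕ, ∃ s ∈ I, ϖ • x ^ n = algebraMap A S s from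
    ⟨ϖ, hϖ, fun n ↦ let ⟨s, _, hs⟩ := this n; ⟨s, hs.symm⟩⟩
  intro n
  induction n with
  | zero => exact ⟨ϖ, hϖI, by simp [Algebra.smul_def]⟩
  | succ n ih =>
    obtain ⟨s, hsI, hs⟩ := ih
    obtain ⟨s', hs'I, hs'⟩ := hfI s hsI
    refine ⟨s', hs'I, ?_⟩
    rw [pow_succ, ← smul_mul_assoc, hs, IsLocalization.mul_mk'_eq_mk'_of_mul, mul_comm, hs']
    exact IsLocalization.mk'_mul_cancel_left s' ⟨ϖ, Submonoid.mem_powers ϖ⟩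

theorem mem_span_singleton_of_forall_mul_mem [IsNoetherianRing A] {ϖ f : A} (hϖ : ϖ ∈ A⁰)
    (hic : ∀ x : Localization.Away ϖ, IsIntegral A x →
      ∃ a : A, x = algebraMap A (Localization.Away ϖ) a)
    {I : Ideal A} (hϖI : ϖ ∈ I) (hfI : ∀ r ∈ I, ∃ s ∈ I, f * r = ϖ * s) :
    f ∈ span {ϖ} := by
  have hint := (isAlmostIntegral_mk'_of_forall_mul_mem (S := Localization.Away ϖ) hϖ hϖI
    hfI).isIntegral_of_nonZeroDivisors_le_comap
      (IsLocalization.nonZeroDivisors_le_comap (Submonoid.powers ϖ) _)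
  obtain ⟨a, ha⟩ := hic _ hint
  rw [IsLocalization.mk'_eq_iff_eq_mul, ← map_mul] at ha
  exact mem_span_singleton'.mpr
    ⟨a, (IsLocalization.injective _ (Submonoid.powers_le.mpr hϖ) ha).symm⟩

end

theorem associatedPrime_heightOne_of_noetherian_general {A : Type*} [CommRing A]
    [IsNoetherianRing A] (ϖ : A) (hϖ : ϖ ∈ nonZeroDivisors A)
    (hic : ∀ x : Localization.Away ϖ, IsIntegral A x →
      ∃ a : A, x = algebraMap A (Localization.Away ϖ) a)
    (𝔭 : Ideal A) (hp : 𝔭.IsPrime) (f : A)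
    (hass : 𝔭 = (Ideal.span {ϖ}).colon (Ideal.span {f})) :
    IsHeightOne 𝔭 := by
  have hϖ𝔭 : ϖ ∈ 𝔭 :=
    hass ▸ mem_colon_span_singleton.mpr (mem_span_singleton'.mpr ⟨f, mul_comm f ϖ⟩)
  obtain ⟨q, hq𝔭, g, hg𝔭, hfq⟩ : ∃ q ∈ 𝔭, ∃ g ∉ 𝔭, f * q = ϖ * g := by
    by_contra! h
    refine hp.ne_top (hass ▸ (eq_top_iff_one _).mpr (mem_colon_span_singleton.mpr ?_))
    rw [one_mul]
    refine mem_span_singleton_of_forall_mul_mem hϖ hic hϖ𝔭 fun r hr ↦ ?_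
    obtain ⟨s, hs⟩ := mem_span_singleton.mp (mem_colon_span_singleton.mp (hass ▸ hr))
    exact ⟨s, by_contra fun hs𝔭 ↦ h r hr s hs𝔭 (by rw [mul_comm, hs]), by rw [mul_comm, hs]⟩
  refine isHeightOne_of_height_eq_one (le_antisymm ?_ ?_)
  · exact height_le_one_of_isPrincipal_of_mem_minimalPrimes _ _
      (mem_minimalPrimes_span_singleton_of_mul_mem hq𝔭 hg𝔭 fun r hr ↦
        mul_mem_span_singleton_of_mem_colon hϖ hfq (hass ▸ hr))
  · exact (one_le_height_span_singleton_of_mem_nonZeroDivisors hϖ).trans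
      (height_mono (span_le.mpr (Set.singleton_subset_iff.mpr hϖ𝔭)))

/-- Let `A` be a Noetherian commutative ring and `ϖ ∈ A` a non-zero-divisor and non-unit
such that `A` is integrally closed in `A[ϖ⁻¹]`.  Then every associated prime ideal of the
ideal `(ϖ)` (a prime of the form `(ϖ) :_A f`) has height one. -/
theorem associatedPrime_heightOne_of_noetherian {A : Type*} [CommRing A]
    [IsNoetherianRing A] (ϖ : A) (hϖ : ϖ ∈ nonZeroDivisors A) (hnu : ¬IsUnit ϖ)
    (hic : ∀ x : Localization.Away ϖ, IsIntegral A x →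
      ∃ a : A, x = algebraMap A (Localization.Away ϖ) a)
    (𝔭 : Ideal A) (hp : 𝔭.IsPrime) (f : A)
    (hass : 𝔭 = (Ideal.span {ϖ}).colon (Ideal.span {f})) :
    IsHeightOne 𝔭 :=
  associatedPrime_heightOne_of_noetherian_general ϖ hϖ hic 𝔭 hp f hass
end
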